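/- The formal power series ∏_{n≥1} (1 - qⁿ)^{625} / (1 - q^{5n})^{125} is congruent to 1 modulo 625 in ℤ[[q]]. -/

import Mathlib

/-!
Modulo `p` the Frobenius gives `(1 - y)^p ≡ 1 - y^p`, and raising a congruence modulo `p^j` to the
`p`-th power upgrades it to one modulo `p^(j+1)`; hence `(1 - qⁿ)^(p^(k+1)) ≡ (1 - q^(pn))^(p^k)`
modulo `p^(k+1)` factor by factor. Over `ℤ/p^(k+1)` the truncated products then agree, and since
they have constant term `1`, the relations defining `F` force `F = 1` there, one coefficient at a
time.
-/

open PowerSeries Finset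

section OneSubPow

variable {R : Type*} [CommRing R] {p : ℕ}

theorem prime_dvd_one_sub_pow_sub (hp : p.Prime) (y : R) : (p : R) ∣ (1 - y) ^ p - (1 - y ^ p) := by
  obtain ⟨r, hr⟩ := exists_add_pow_prime_eq hp 1 (-y)
  rw [← sub_eq_add_neg] at hr
  rcases hp.eq_two_or_odd' with rfl | hodd
  · exact ⟨-y * r + y ^ 2, by rw [hr]; push_cast; ring⟩
  · exact ⟨-y * r, by rw [hr, hodd.neg_pow]; ring⟩

theorem prime_pow_dvd_one_sub_pow_sub (hp : p.Prime) (y : R) (k : ℕ) :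
    (p : R) ^ (k + 1) ∣ (1 - y) ^ p ^ (k + 1) - (1 - y ^ p) ^ p ^ k := by
  rw [pow_succ' p k, pow_mul]
  exact dvd_sub_pow_of_dvd_sub (prime_dvd_one_sub_pow_sub hp y) k

theorem one_sub_pow_prime_pow_eq (hp : p.Prime) {k : ℕ} (hR : (p : R) ^ (k + 1) = 0) (y : R) :
    (1 - y) ^ p ^ (k + 1) = (1 - y ^ p) ^ p ^ k := by
  obtain ⟨c, hc⟩ := prime_pow_dvd_one_sub_pow_sub hp y k
  rwa [hR, zero_mul, sub_eq_zero] at hc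

end OneSubPow

theorem PowerSeries.eq_zero_of_forall_coeff_mul_eq_zero {R : Type*} [CommRing R] {A : R⟦X⟧}
    (P : ℕ → R⟦X⟧) (hP : ∀ n, IsUnit (constantCoeff (P n))) (h : ∀ n, coeff n (A * P n) = 0) :
    A = 0 := by
  have hdvd : ∀ n, X ^ n ∣ A := by
    intro n
    induction n with
    | zero => exact one_dvd A
    | succ n ih =>
      obtain ⟨B, rfl⟩ := ih
      have hB := h n
      rw [mul_assoc, coeff_X_pow_mul', if_pos le_rfl, Nat.sub_self, coeff_zero_eq_constantCoeff,
        map_mul, (hP n).mul_left_eq_zero] at hB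
      rw [pow_succ]
      exact mul_dvd_mul_left _ (X_dvd_iff.mpr hB)
  ext m
  exact X_pow_dvd_iff.mp (hdvd (m + 1)) m m.lt_succ_self

theorem prime_pow_dvd_coeff_sub_one_of_eta_quotient {p : ℕ} (hp : p.Prime) (k : ℕ) (F : ℤ⟦X⟧)
    (hF : ∀ N : ℕ, coeff N (F * ∏ n ∈ Icc 1 N, (1 - X ^ (p * n)) ^ p ^ k)
        = coeff N (∏ n ∈ Icc 1 N, (1 - X ^ n) ^ p ^ (k + 1))) (m : ℕ) :
    (p : ℤ) ^ (k + 1) ∣ coeff m (F - 1) := by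
  let φ := PowerSeries.map (Int.castRingHom (ZMod (p ^ (k + 1))))
  let P : ℕ → (ZMod (p ^ (k + 1)))⟦X⟧ := fun N => ∏ n ∈ Icc 1 N, (1 - X ^ (p * n)) ^ p ^ k
  have hP : ∀ N, IsUnit (constantCoeff (P N)) := fun N => by
    suffices constantCoeff (P N) = 1 from this ▸ isUnit_one
    simp only [P, map_prod, map_pow, map_sub, map_one, constantCoeff_X]
    refine prod_eq_one fun n hn => ?_
    have hpn : p * n ≠ 0 := mul_ne_zero hp.ne_zero (Nat.one_le_iff_ne_zero.mp (mem_Icc.mp hn).1)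
    rw [zero_pow hpn, sub_zero, one_pow]
  have hφP : ∀ N, φ (∏ n ∈ Icc 1 N, (1 - X ^ (p * n)) ^ p ^ k) = P N := fun N => by simp [φ, P]
  have hφQ : ∀ N, φ (∏ n ∈ Icc 1 N, (1 - X ^ n) ^ p ^ (k + 1)) = P N := fun N => by
    have hchar : ((p : (ZMod (p ^ (k + 1)))⟦X⟧)) ^ (k + 1) = 0 := by
      rw [← Nat.cast_pow, ← map_natCast (C (R := ZMod (p ^ (k + 1)))), ZMod.natCast_self, map_zero]
    simp [φ, P, one_sub_pow_prime_pow_eq hp hchar, ← pow_mul, mul_comm]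
  have hφF : φ (F - 1) = 0 := eq_zero_of_forall_coeff_mul_eq_zero P hP fun N => by
    have hFN := congrArg (Int.castRingHom (ZMod (p ^ (k + 1)))) (hF N)
    rw [← coeff_map, ← coeff_map, map_mul, hφP, hφQ] at hFN
    rw [map_sub, map_one, sub_mul, one_mul, map_sub, hFN, sub_self]
  have hm := congrArg (coeff m) hφF
  rw [coeff_map, map_zero] at hm
  exact_mod_cast (ZMod.intCast_zmod_eq_zero_iff_dvd _ _).mp hm

/-- The formal power series `∏_{n≥1} (1-qⁿ)^{625} / (1-q^{5n})^{125}` (encoded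
coefficientwise via truncated products) is congruent to `1` modulo `625` in `ℤ[[q]]`. -/
theorem stmt_9 (F : PowerSeries ℤ)
    (hF : ∀ N : ℕ, ∀ m ≤ N,
      coeff (R := ℤ) m (F * ∏ n ∈ Finset.Icc 1 N, (1 - X ^ (5 * n)) ^ 125)
        = coeff (R := ℤ) m (∏ n ∈ Finset.Icc 1 N, (1 - X ^ n) ^ 625)) :
    ∀ m : ℕ, (625 : ℤ) ∣ coeff (R := ℤ) m (F - 1) :=
  prime_pow_dvd_coeff_sub_one_of_eta_quotient Nat.prime_five 3 F fun N => hF N N le_rfl
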